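/- arXiv:1105.1208 — 2 statements merged into one kernel-verified Lean document; each statement's English description precedes it below -/
import Mathlib

section
/- Let Λ be a row-finite k-graph with no sources. If Λ has no local periodicity at u ∈ Λ^0 and v ≤ u (i.e. vΛu ≠ ∅), then Λ has no local periodicity at v. -/
set_option autoImplicit false

open scoped Classical

/-- A `k`-graph: a countable small category together with a degree functor
`d : Λ → ℕ^k` satisfying the unique factorization property.  Paths (morphisms)
form a single type; vertices (objects) are identified with the paths of
degree `0`. -/
structure KGraph (k : ℕ) where
  /-- the type of paths (morphisms) of the `k`-graph -/
  Path : Type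
  countable : Countable Path
  nonempty : Nonempty Path
  /-- the range (codomain) vertex of a path -/
  r : Path → Path
  /-- the source (domain) vertex of a path -/
  s : Path → Path
  /-- composition: `comp lam mu` is the path `λμ`, meaningful when `s lam = r mu` -/
  comp : Path → Path → Path
  /-- the degree functor -/
  d : Path → Fin k → ℕ
  d_r : ∀ lam, d (r lam) = 0
  d_s : ∀ lam, d (s lam) = 0
  r_r : ∀ lam, r (r lam) = r lam
  s_r : ∀ lam, s (r lam) = r lam
  r_s : ∀ lam, r (s lam) = s lam
  s_s : ∀ lam, s (s lam) = s lam
  id_comp : ∀ lam, comp (r lam) lam = lam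
  comp_id : ∀ lam, comp lam (s lam) = lam
  r_comp : ∀ lam mu, s lam = r mu → r (comp lam mu) = r lam
  s_comp : ∀ lam mu, s lam = r mu → s (comp lam mu) = s mu
  d_comp : ∀ lam mu, s lam = r mu → d (comp lam mu) = d lam + d mu
  comp_assoc : ∀ lam mu nu, s lam = r mu → s mu = r nu →
    comp (comp lam mu) nu = comp lam (comp mu nu)
  /-- the unique factorization property -/
  factor : ∀ lam (m n : Fin k → ℕ), d lam = m + n →
    ∃! p : Path × Path, s p.1 = r p.2 ∧ comp p.1 p.2 = lam ∧ d p.1 = m ∧ d p.2 = n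

namespace KGraph

variable {k : ℕ}

/-- `v` is a vertex, i.e. an element of `Λ⁰`. -/
def IsVertex (Λ : KGraph k) (v : Λ.Path) : Prop := Λ.d v = 0

/-- `v ≤ w`, i.e. `vΛw ≠ ∅`. -/
def Conn (Λ : KGraph k) (v w : Λ.Path) : Prop := ∃ lam, Λ.r lam = v ∧ Λ.s lam = w

/-- the canonical generator `e i` of `ℕ^k`. -/
def eVec (k : ℕ) (i : Fin k) : Fin k → ℕ := Pi.single i 1

/-- `Λ` is row-finite: `vΛⁿ` is finite for every vertex `v` and `n ∈ ℕ^k`. -/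
def RowFinite (Λ : KGraph k) : Prop :=
  ∀ v, Λ.IsVertex v → ∀ n : Fin k → ℕ, {lam | Λ.r lam = v ∧ Λ.d lam = n}.Finite

/-- `Λ` has no sources: `vΛ^{e i} ≠ ∅` for every vertex `v` and `i`. -/
def NoSources (Λ : KGraph k) : Prop :=
  ∀ v, Λ.IsVertex v → ∀ i : Fin k, ∃ lam, Λ.r lam = v ∧ Λ.d lam = eVec k i

/-- the middle factor `λ(m,n)`: the unique `σ` such that `λ = μστ` with
`d μ = m`, `d σ = n - m`, `d τ = d λ - n` (junk value if no factorization exists). -/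
noncomputable def seg (Λ : KGraph k) (lam : Λ.Path) (m n : Fin k → ℕ) : Λ.Path :=
  if h : ∃ sig, ∃ mu tau, Λ.s mu = Λ.r sig ∧ Λ.s sig = Λ.r tau ∧
      Λ.comp (Λ.comp mu sig) tau = lam ∧ Λ.d mu = m ∧ Λ.d sig = n - m ∧
      Λ.d tau = Λ.d lam - n
  then h.choose else lam

/-- `Λ` has no local periodicity at the vertex `v`. -/
def NoLocalPeriodicity (Λ : KGraph k) (v : Λ.Path) : Prop :=
  ∀ m n : Fin k → ℕ, m ≠ n →
    ∃ lam, Λ.r lam = v ∧ m ⊔ n ≤ Λ.d lam ∧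
      Λ.seg lam m (m + Λ.d lam - (m ⊔ n)) ≠ Λ.seg lam n (n + Λ.d lam - (m ⊔ n))

/-- `Λ` is aperiodic: no vertex has local periodicity. -/
def Aperiodic (Λ : KGraph k) : Prop := ∀ v, Λ.IsVertex v → Λ.NoLocalPeriodicity v

/-- a hereditary set of vertices -/
def Hereditary (Λ : KGraph k) (H : Set Λ.Path) : Prop :=
  ∀ v ∈ H, ∀ w, Λ.Conn v w → w ∈ H

/-- a saturated set of vertices -/
def Saturated (Λ : KGraph k) (H : Set Λ.Path) : Prop :=
  ∀ v, Λ.IsVertex v → (∃ mu, Λ.r mu = v) →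
    (∃ i : Fin k, ∀ lam, Λ.r lam = v → Λ.d lam = eVec k i → Λ.s lam ∈ H) → v ∈ H

/-- the saturation of a set of vertices: the smallest saturated set containing it -/
def saturation (Λ : KGraph k) (H : Set Λ.Path) : Set Λ.Path :=
  ⋂₀ {K : Set Λ.Path | H ⊆ K ∧ Λ.Saturated K}

/-- no local periodicity at the vertex `v` of the quotient graph `Γ(Λ \ H)`
(whose paths are the paths of `Λ` with source outside `H`). -/
def QuotNoLocalPeriodicity (Λ : KGraph k) (H : Set Λ.Path) (v : Λ.Path) : Prop :=
  ∀ m n : Fin k → ℕ, m ≠ n →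
    ∃ lam, Λ.r lam = v ∧ Λ.s lam ∉ H ∧ m ⊔ n ≤ Λ.d lam ∧
      Λ.seg lam m (m + Λ.d lam - (m ⊔ n)) ≠ Λ.seg lam n (n + Λ.d lam - (m ⊔ n))

/-- `Λ` is strongly aperiodic: `Γ(Λ \ H)` is aperiodic for every saturated
hereditary proper subset `H ⊊ Λ⁰`. -/
def StronglyAperiodic (Λ : KGraph k) : Prop :=
  ∀ H : Set Λ.Path, (∀ v ∈ H, Λ.IsVertex v) → Λ.Hereditary H → Λ.Saturated H →
    H ≠ {v | Λ.IsVertex v} →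
    ∀ v, Λ.IsVertex v → v ∉ H → Λ.QuotNoLocalPeriodicity H v

/-- a maximal tail -/
def MaximalTail (Λ : KGraph k) (γ : Set Λ.Path) : Prop :=
  γ.Nonempty ∧ (∀ v ∈ γ, Λ.IsVertex v) ∧
  (∀ v₁ ∈ γ, ∀ v₂ ∈ γ, ∃ w ∈ γ, Λ.Conn v₁ w ∧ Λ.Conn v₂ w) ∧
  (∀ v ∈ γ, ∀ i : Fin k, ∃ f, Λ.r f = v ∧ Λ.d f = eVec k i ∧ Λ.s f ∈ γ) ∧
  (∀ v, Λ.IsVertex v → ∀ w ∈ γ, Λ.Conn v w → v ∈ γ)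

end KGraph

/-! Choose `μ ∈ vΛu` and put `p = d μ`. For `m ≠ n`, no local periodicity at `u` applied to
`m + p ≠ n + p` gives `τ ∈ uΛ` whose segments at `m + p` and `n + p`, of some length `D`, differ.
In `λ = μτ` these are the segments at `m + 2p` and `n + 2p`, and they are the tails of the
segments of `λ` at `m` and `n`, whose length is `d λ - (m ∨ n) = 2p + D`; so those differ too. -/

namespace KGraph

variable {k : ℕ} (Λ : KGraph k)

theorem eq_of_comp_eq {μ ρ μ' ρ' : Λ.Path} (h : Λ.s μ = Λ.r ρ) (h' : Λ.s μ' = Λ.r ρ')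
    (hcomp : Λ.comp μ ρ = Λ.comp μ' ρ') (hμ : Λ.d μ = Λ.d μ') (hρ : Λ.d ρ = Λ.d ρ') :
    μ = μ' ∧ ρ = ρ' :=
  Prod.ext_iff.mp <| (Λ.factor (Λ.comp μ ρ) (Λ.d μ) (Λ.d ρ) (Λ.d_comp μ ρ h)).unique
    (y₁ := (μ, ρ)) (y₂ := (μ', ρ')) ⟨h, rfl, rfl, rfl⟩ ⟨h', hcomp.symm, hμ.symm, hρ.symm⟩

theorem mid_eq_of_comp_comp_eq {μ σ τ μ' σ' τ' : Λ.Path}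
    (h₁ : Λ.s μ = Λ.r σ) (h₂ : Λ.s σ = Λ.r τ) (h₁' : Λ.s μ' = Λ.r σ') (h₂' : Λ.s σ' = Λ.r τ')
    (hcomp : Λ.comp (Λ.comp μ σ) τ = Λ.comp (Λ.comp μ' σ') τ')
    (hμ : Λ.d μ = Λ.d μ') (hσ : Λ.d σ = Λ.d σ') (hτ : Λ.d τ = Λ.d τ') : σ = σ' := by
  obtain ⟨hμσ, -⟩ := Λ.eq_of_comp_eq (by rwa [Λ.s_comp _ _ h₁]) (by rwa [Λ.s_comp _ _ h₁'])
    hcomp (by rw [Λ.d_comp _ _ h₁, Λ.d_comp _ _ h₁', hμ, hσ]) hτ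
  exact (Λ.eq_of_comp_eq h₁ h₁' hμσ hμ hσ).2

theorem exists_comp_eq {lam : Λ.Path} {m : Fin k → ℕ} (hm : m ≤ Λ.d lam) :
    ∃ μ ρ, Λ.s μ = Λ.r ρ ∧ Λ.comp μ ρ = lam ∧ Λ.d μ = m := by
  obtain ⟨⟨μ, ρ⟩, ⟨h, hcomp, hμ, -⟩, -⟩ :=
    Λ.factor lam m (Λ.d lam - m) (add_tsub_cancel_of_le hm).symm
  exact ⟨μ, ρ, h, hcomp, hμ⟩

theorem exists_comp_comp_eq {lam : Λ.Path} {m n : Fin k → ℕ} (hmn : m ≤ n)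
    (hn : n ≤ Λ.d lam) :
    ∃ μ σ τ, Λ.s μ = Λ.r σ ∧ Λ.s σ = Λ.r τ ∧ Λ.comp (Λ.comp μ σ) τ = lam ∧
      Λ.d μ = m ∧ Λ.d μ + Λ.d σ = n := by
  obtain ⟨α, τ, hατ, rfl, rfl⟩ := Λ.exists_comp_eq hn
  obtain ⟨μ, σ, hμσ, rfl, rfl⟩ := Λ.exists_comp_eq hmn
  exact ⟨μ, σ, τ, hμσ, by rwa [← Λ.s_comp _ _ hμσ], rfl, rfl, (Λ.d_comp _ _ hμσ).symm⟩

theorem seg_comp_comp {μ σ τ : Λ.Path} (h₁ : Λ.s μ = Λ.r σ) (h₂ : Λ.s σ = Λ.r τ) :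
    Λ.seg (Λ.comp (Λ.comp μ σ) τ) (Λ.d μ) (Λ.d μ + Λ.d σ) = σ := by
  have hd : Λ.d (Λ.comp (Λ.comp μ σ) τ) = Λ.d μ + Λ.d σ + Λ.d τ := by
    rw [Λ.d_comp _ _ (by rwa [Λ.s_comp _ _ h₁]), Λ.d_comp _ _ h₁]
  have hex : ∃ σ', ∃ μ' τ', Λ.s μ' = Λ.r σ' ∧ Λ.s σ' = Λ.r τ' ∧
      Λ.comp (Λ.comp μ' σ') τ' = Λ.comp (Λ.comp μ σ) τ ∧ Λ.d μ' = Λ.d μ ∧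
      Λ.d σ' = Λ.d μ + Λ.d σ - Λ.d μ ∧
      Λ.d τ' = Λ.d (Λ.comp (Λ.comp μ σ) τ) - (Λ.d μ + Λ.d σ) :=
    ⟨σ, μ, τ, h₁, h₂, rfl, rfl, (add_tsub_cancel_left _ _).symm,
      by rw [hd, add_tsub_cancel_left]⟩
  rw [seg, dif_pos hex]
  obtain ⟨μ', τ', h₁', h₂', hcomp, hμ, hσ, hτ⟩ := hex.choose_spec
  exact Λ.mid_eq_of_comp_comp_eq h₁' h₂' h₁ h₂ hcomp hμ (hσ.trans (add_tsub_cancel_left _ _))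
    (hτ.trans (by rw [hd, add_tsub_cancel_left]))

theorem seg_comp_left {ν lam : Λ.Path} (h : Λ.s ν = Λ.r lam) {m n : Fin k → ℕ}
    (hmn : m ≤ n) (hn : n ≤ Λ.d lam) :
    Λ.seg (Λ.comp ν lam) (Λ.d ν + m) (Λ.d ν + n) = Λ.seg lam m n := by
  obtain ⟨μ, σ, τ, h₁, h₂, rfl, rfl, rfl⟩ := Λ.exists_comp_comp_eq hmn hn
  have hνμσ : Λ.s ν = Λ.r (Λ.comp μ σ) := by
    rwa [Λ.r_comp _ _ (by rwa [Λ.s_comp _ _ h₁])] at h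
  have hνμ : Λ.s ν = Λ.r μ := by rwa [Λ.r_comp _ _ h₁] at hνμσ
  rw [Λ.seg_comp_comp h₁ h₂, ← Λ.comp_assoc _ _ _ hνμσ (by rwa [Λ.s_comp _ _ h₁]),
    ← Λ.comp_assoc _ _ _ hνμ h₁, ← add_assoc, ← Λ.d_comp _ _ hνμ,
    Λ.seg_comp_comp (by rwa [Λ.s_comp _ _ hνμ]) h₂]

theorem seg_comp_right {lam ν : Λ.Path} (h : Λ.s lam = Λ.r ν) {m n : Fin k → ℕ}
    (hmn : m ≤ n) (hn : n ≤ Λ.d lam) :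
    Λ.seg (Λ.comp lam ν) m n = Λ.seg lam m n := by
  obtain ⟨μ, σ, τ, h₁, h₂, rfl, rfl, rfl⟩ := Λ.exists_comp_comp_eq hmn hn
  have hτν : Λ.s τ = Λ.r ν := by rwa [Λ.s_comp _ _ (by rwa [Λ.s_comp _ _ h₁])] at h
  rw [Λ.seg_comp_comp h₁ h₂, Λ.comp_assoc _ _ _ (by rwa [Λ.s_comp _ _ h₁]) hτν,
    Λ.seg_comp_comp h₁ (by rwa [Λ.r_comp _ _ hτν])]

theorem seg_seg {lam : Λ.Path} {a b c e : Fin k → ℕ} (hab : a + b ≤ Λ.d lam) (hce : c ≤ e)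
    (heb : e ≤ b) :
    Λ.seg (Λ.seg lam a (a + b)) c e = Λ.seg lam (a + c) (a + e) := by
  obtain ⟨μ, σ, τ, h₁, h₂, rfl, rfl, hσ⟩ := Λ.exists_comp_comp_eq le_self_add hab
  obtain rfl := add_left_cancel hσ
  rw [Λ.seg_comp_comp h₁ h₂, Λ.comp_assoc _ _ _ h₁ h₂,
    Λ.seg_comp_left (by rwa [Λ.r_comp _ _ h₂]) hce
      (by rw [Λ.d_comp _ _ h₂]; exact heb.trans le_self_add),
    Λ.seg_comp_right h₂ hce heb]

theorem seg_add_eq_of_seg_eq {lam : Λ.Path} {m n ℓ c e : Fin k → ℕ} (hm : m + ℓ ≤ Λ.d lam)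
    (hn : n + ℓ ≤ Λ.d lam) (h : Λ.seg lam m (m + ℓ) = Λ.seg lam n (n + ℓ)) (hce : c ≤ e)
    (heℓ : e ≤ ℓ) :
    Λ.seg lam (m + c) (m + e) = Λ.seg lam (n + c) (n + e) := by
  rw [← Λ.seg_seg hm hce heℓ, h, Λ.seg_seg hn hce heℓ]

end KGraph

theorem stmt4_general {k : ℕ} (Λ : KGraph k)
    (u v : Λ.Path) (hu : Λ.NoLocalPeriodicity u) (hvu : Λ.Conn v u) :
    Λ.NoLocalPeriodicity v := by
  obtain ⟨μ, rfl, rfl⟩ := hvu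
  intro m n hmn
  obtain ⟨τ, hτ, hτd, hτseg⟩ :=
    hu (m + Λ.d μ) (n + Λ.d μ) fun h => hmn (add_right_cancel h)
  set p := Λ.d μ
  set N := m ⊔ n
  have hsup : (m + p) ⊔ (n + p) = N + p := funext fun i => max_add_add_right (m i) (n i) (p i)
  rw [hsup] at hτd hτseg
  obtain ⟨D, hD⟩ := exists_add_of_le hτd
  have hsr : Λ.s μ = Λ.r τ := hτ.symm
  have hd : Λ.d (Λ.comp μ τ) = N + (p + p + D) := by
    rw [Λ.d_comp _ _ hsr, hD]; abel
  have hτseg_eq : ∀ q ≤ N, Λ.seg τ (q + p) (q + p + Λ.d τ - (N + p)) =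
      Λ.seg (Λ.comp μ τ) (q + (p + p)) (q + (p + p + D)) := by
    intro q hq
    rw [hD, show q + p + (N + p + D) = q + p + D + (N + p) by abel, add_tsub_cancel_right,
      ← Λ.seg_comp_left hsr le_self_add (by rw [hD]; gcongr)]
    congr 1 <;> abel
  refine ⟨Λ.comp μ τ, Λ.r_comp _ _ hsr, by rw [hd]; exact le_self_add, fun heq => hτseg ?_⟩
  rw [hd, add_left_comm m, add_left_comm n, add_tsub_cancel_left, add_tsub_cancel_left] at heq
  rw [hτseg_eq m le_sup_left, hτseg_eq n le_sup_right]
  exact Λ.seg_add_eq_of_seg_eq (by rw [hd]; gcongr; exact le_sup_left)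
    (by rw [hd]; gcongr; exact le_sup_right) heq le_self_add le_rfl

/-- No local periodicity passes from `u` to any `v` with `v ≤ u`. -/
theorem stmt4 {k : ℕ} (Λ : KGraph k) (hrf : Λ.RowFinite) (hns : Λ.NoSources)
    (u v : Λ.Path) (hu : Λ.NoLocalPeriodicity u) (hvu : Λ.Conn v u) :
    Λ.NoLocalPeriodicity v :=
  stmt4_general Λ u v hu hvu
end

section
/- Let Λ₁ be a row-finite k₁-graph with no sources and Λ₂ a row-finite k₂-graph with no sources. Then the cartesian product (k₁+k₂)-graph Λ₁ × Λ₂ is aperiodic if and only if both Λ₁ and Λ₂ are aperiodic. -/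
set_option autoImplicit false

open scoped Classical

namespace KGraph

section ProductGraph

variable {k₁ k₂ : ℕ}

private lemma fin_append_zero :
    Fin.append (0 : Fin k₁ → ℕ) (0 : Fin k₂ → ℕ) = 0 := by
  funext i
  refine Fin.addCases (fun j => ?_) (fun j => ?_) i <;>
    simp [Fin.append_left, Fin.append_right]

private lemma fin_append_add (f f' : Fin k₁ → ℕ) (g g' : Fin k₂ → ℕ) :
    Fin.append (f + f') (g + g') = Fin.append f g + Fin.append f' g' := by
  funext i
  refine Fin.addCases (fun j => ?_) (fun j => ?_) i <;>
    simp [Fin.append_left, Fin.append_right]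

private lemma fin_append_restrict (m : Fin (k₁ + k₂) → ℕ) :
    Fin.append (fun i => m (Fin.castAdd k₂ i)) (fun j => m (Fin.natAdd k₁ j)) = m := by
  funext i
  refine Fin.addCases (fun j => ?_) (fun j => ?_) i <;>
    simp [Fin.append_left, Fin.append_right]

/-- The cartesian product of a `k₁`-graph and a `k₂`-graph, a `(k₁+k₂)`-graph. -/
noncomputable def prod (Λ₁ : KGraph k₁) (Λ₂ : KGraph k₂) : KGraph (k₁ + k₂) where
  Path := Λ₁.Path × Λ₂.Path
  countable := by have := Λ₁.countable; have := Λ₂.countable; exact inferInstance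
  nonempty := by have := Λ₁.nonempty; have := Λ₂.nonempty; exact inferInstance
  r := fun p => (Λ₁.r p.1, Λ₂.r p.2)
  s := fun p => (Λ₁.s p.1, Λ₂.s p.2)
  comp := fun p q => (Λ₁.comp p.1 q.1, Λ₂.comp p.2 q.2)
  d := fun p => Fin.append (Λ₁.d p.1) (Λ₂.d p.2)
  d_r := fun p => by dsimp only; rw [Λ₁.d_r, Λ₂.d_r]; exact fin_append_zero
  d_s := fun p => by dsimp only; rw [Λ₁.d_s, Λ₂.d_s]; exact fin_append_zero
  r_r := fun p => by dsimp only; rw [Λ₁.r_r, Λ₂.r_r]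
  s_r := fun p => by dsimp only; rw [Λ₁.s_r, Λ₂.s_r]
  r_s := fun p => by dsimp only; rw [Λ₁.r_s, Λ₂.r_s]
  s_s := fun p => by dsimp only; rw [Λ₁.s_s, Λ₂.s_s]
  id_comp := fun p => by dsimp only; rw [Λ₁.id_comp, Λ₂.id_comp]
  comp_id := fun p => by dsimp only; rw [Λ₁.comp_id, Λ₂.comp_id]
  r_comp := fun p q h => by
    dsimp only
    have h1 : Λ₁.s p.1 = Λ₁.r q.1 := congrArg Prod.fst h
    have h2 : Λ₂.s p.2 = Λ₂.r q.2 := congrArg Prod.snd h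
    rw [Λ₁.r_comp _ _ h1, Λ₂.r_comp _ _ h2]
  s_comp := fun p q h => by
    dsimp only
    have h1 : Λ₁.s p.1 = Λ₁.r q.1 := congrArg Prod.fst h
    have h2 : Λ₂.s p.2 = Λ₂.r q.2 := congrArg Prod.snd h
    rw [Λ₁.s_comp _ _ h1, Λ₂.s_comp _ _ h2]
  d_comp := fun p q h => by
    dsimp only
    have h1 : Λ₁.s p.1 = Λ₁.r q.1 := congrArg Prod.fst h
    have h2 : Λ₂.s p.2 = Λ₂.r q.2 := congrArg Prod.snd h
    rw [Λ₁.d_comp _ _ h1, Λ₂.d_comp _ _ h2, fin_append_add]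
  comp_assoc := fun p q t h h' => by
    dsimp only
    have h1 : Λ₁.s p.1 = Λ₁.r q.1 := congrArg Prod.fst h
    have h2 : Λ₂.s p.2 = Λ₂.r q.2 := congrArg Prod.snd h
    have h1' : Λ₁.s q.1 = Λ₁.r t.1 := congrArg Prod.fst h'
    have h2' : Λ₂.s q.2 = Λ₂.r t.2 := congrArg Prod.snd h'
    rw [Λ₁.comp_assoc _ _ _ h1 h1', Λ₂.comp_assoc _ _ _ h2 h2']
  factor := fun p m n hmn => by
    have h1 : Λ₁.d p.1 =
        (fun i => m (Fin.castAdd k₂ i)) + (fun i => n (Fin.castAdd k₂ i)) := by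
      funext i
      have := congrFun hmn (Fin.castAdd k₂ i)
      simpa [Fin.append_left] using this
    have h2 : Λ₂.d p.2 =
        (fun j => m (Fin.natAdd k₁ j)) + (fun j => n (Fin.natAdd k₁ j)) := by
      funext j
      have := congrFun hmn (Fin.natAdd k₁ j)
      simpa [Fin.append_right] using this
    obtain ⟨q₁, ⟨hq₁s, hq₁c, hq₁m, hq₁n⟩, hq₁u⟩ := Λ₁.factor p.1 _ _ h1
    obtain ⟨q₂, ⟨hq₂s, hq₂c, hq₂m, hq₂n⟩, hq₂u⟩ := Λ₂.factor p.2 _ _ h2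
    refine ⟨((q₁.1, q₂.1), (q₁.2, q₂.2)), ⟨?_, ?_, ?_, ?_⟩, ?_⟩
    · show (Λ₁.s q₁.1, Λ₂.s q₂.1) = (Λ₁.r q₁.2, Λ₂.r q₂.2)
      rw [hq₁s, hq₂s]
    · show (Λ₁.comp q₁.1 q₁.2, Λ₂.comp q₂.1 q₂.2) = p
      rw [hq₁c, hq₂c]
    · show Fin.append (Λ₁.d q₁.1) (Λ₂.d q₂.1) = m
      rw [hq₁m, hq₂m]; exact fin_append_restrict m
    · show Fin.append (Λ₁.d q₁.2) (Λ₂.d q₂.2) = n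
      rw [hq₁n, hq₂n]; exact fin_append_restrict n
    · rintro ⟨⟨a, b⟩, ⟨c, e⟩⟩ ⟨hs, hc, hm, hn⟩
      have hs1 : Λ₁.s a = Λ₁.r c := congrArg Prod.fst hs
      have hs2 : Λ₂.s b = Λ₂.r e := congrArg Prod.snd hs
      have hc1 : Λ₁.comp a c = p.1 := congrArg Prod.fst hc
      have hc2 : Λ₂.comp b e = p.2 := congrArg Prod.snd hc
      have hm1 : Λ₁.d a = fun i => m (Fin.castAdd k₂ i) := by
        funext i
        have := congrFun hm (Fin.castAdd k₂ i)
        simpa [Fin.append_left] using this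
      have hm2 : Λ₂.d b = fun j => m (Fin.natAdd k₁ j) := by
        funext j
        have := congrFun hm (Fin.natAdd k₁ j)
        simpa [Fin.append_right] using this
      have hn1 : Λ₁.d c = fun i => n (Fin.castAdd k₂ i) := by
        funext i
        have := congrFun hn (Fin.castAdd k₂ i)
        simpa [Fin.append_left] using this
      have hn2 : Λ₂.d e = fun j => n (Fin.natAdd k₁ j) := by
        funext j
        have := congrFun hn (Fin.natAdd k₁ j)
        simpa [Fin.append_right] using this
      have e1 : (a, c) = q₁ := hq₁u (a, c) ⟨hs1, hc1, hm1, hn1⟩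
      have e2 : (b, e) = q₂ := hq₂u (b, e) ⟨hs2, hc2, hm2, hn2⟩
      have ea : a = q₁.1 := congrArg Prod.fst e1
      have ec : c = q₁.2 := congrArg Prod.snd e1
      have eb : b = q₂.1 := congrArg Prod.fst e2
      have ee : e = q₂.2 := congrArg Prod.snd e2
      subst ea; subst ec; subst eb; subst ee
      rfl

end ProductGraph

end KGraph

/-!
A degree in `ℕ^(k₁+k₂)` is a pair of degrees (`Fin.append`), and by unique factorization
the segment `(λ₁, λ₂)(m, n)` of a path of `Λ₁ × Λ₂` is the pair of segments
`(λ₁(m₁, n₁), λ₂(m₂, n₂))`. So a path `(λ₁, λ₂)` separates `m ≠ n` exactly when one of its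
components separates the corresponding components of `m` and `n`. Testing the product on degrees
`(m₁, 0)`, `(n₁, 0)` shows the factors are aperiodic. Conversely a separating path in one factor
is paired with an arbitrary path of degree `m ⊔ n` in the other, which exists since the graphs
have no sources.
-/

namespace Fin

variable {α : Type*} {k₁ k₂ : ℕ}

theorem append_sub [Sub α] (f f' : Fin k₁ → α) (g g' : Fin k₂ → α) :
    Fin.append (f - f') (g - g') = Fin.append f g - Fin.append f' g' := by
  funext i
  refine Fin.addCases (fun j => ?_) (fun j => ?_) i <;> simp

theorem append_sup [Max α] (f f' : Fin k₁ → α) (g g' : Fin k₂ → α) :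
    Fin.append (f ⊔ f') (g ⊔ g') = Fin.append f g ⊔ Fin.append f' g' := by
  funext i
  refine Fin.addCases (fun j => ?_) (fun j => ?_) i <;> simp

theorem append_le_append_iff [LE α] {f f' : Fin k₁ → α} {g g' : Fin k₂ → α} :
    Fin.append f g ≤ Fin.append f' g' ↔ f ≤ f' ∧ g ≤ g' := by
  simp only [Pi.le_def, Fin.forall_fin_add, Fin.append_left, Fin.append_right]

theorem append_inj_iff {f f' : Fin k₁ → α} {g g' : Fin k₂ → α} :
    Fin.append f g = Fin.append f' g' ↔ f = f' ∧ g = g' :=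
  ⟨fun h => Prod.mk.inj ((Fin.appendEquiv k₁ k₂).injective h), fun ⟨hf, hg⟩ => hf ▸ hg ▸ rfl⟩

theorem exists_append_eq (f : Fin (k₁ + k₂) → α) : ∃ g h, Fin.append g h = f :=
  ⟨_, _, Fin.append_castAdd_natAdd⟩

end Fin

namespace KGraph

section Factorization

variable {k : ℕ} (Λ : KGraph k)

theorem eq_of_comp_eq_s8 {a b a' b' : Λ.Path} (h : Λ.s a = Λ.r b) (h' : Λ.s a' = Λ.r b')
    (hc : Λ.comp a b = Λ.comp a' b') (ha : Λ.d a = Λ.d a') (hb : Λ.d b = Λ.d b') :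
    a = a' ∧ b = b' :=
  Prod.mk.inj <| (Λ.factor (Λ.comp a b) (Λ.d a) (Λ.d b) (Λ.d_comp a b h)).unique
    ⟨h, rfl, rfl, rfl⟩ ⟨h', hc.symm, ha.symm, hb.symm⟩

variable {Λ}

theorem IsVertex.r_eq {v : Λ.Path} (hv : Λ.IsVertex v) : Λ.r v = v :=
  (Λ.eq_of_comp_eq_s8 (Λ.s_r v) (Λ.r_s v).symm (by rw [Λ.id_comp, Λ.comp_id])
    (by rw [Λ.d_r, hv]) (by rw [hv, Λ.d_s])).1

theorem NoSources.exists_path (hns : Λ.NoSources) {v : Λ.Path} (hv : Λ.IsVertex v)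
    (n : Fin k → ℕ) : ∃ lam, Λ.r lam = v ∧ Λ.d lam = n := by
  induction n using Pi.single_induction generalizing v with
  | zero => exact ⟨v, hv.r_eq, hv⟩
  | add a b ha hb =>
    obtain ⟨lam, hr, hd⟩ := ha hv
    obtain ⟨mu, hr', hd'⟩ := hb (Λ.d_s lam)
    exact ⟨Λ.comp lam mu, by rw [Λ.r_comp _ _ hr'.symm, hr], by rw [Λ.d_comp _ _ hr'.symm, hd, hd']⟩
  | single i c =>
    induction c generalizing v with
    | zero => exact ⟨v, hv.r_eq, by rw [Pi.single_zero]; exact hv⟩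
    | succ c ih =>
      obtain ⟨lam, hr, hd⟩ := ih hv
      obtain ⟨e, hre, hde⟩ := hns _ (Λ.d_s lam) i
      refine ⟨Λ.comp lam e, by rw [Λ.r_comp _ _ hre.symm, hr], ?_⟩
      rw [Λ.d_comp _ _ hre.symm, hd, hde, eVec, ← Pi.single_add]

end Factorization

section Segments

variable {k : ℕ} {Λ : KGraph k}

/-- The condition in the definition of `seg` reads `∃ sig, Λ.IsSeg lam m n sig`. -/
def IsSeg (Λ : KGraph k) (lam : Λ.Path) (m n : Fin k → ℕ) (sig : Λ.Path) : Prop :=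
  ∃ mu tau, Λ.s mu = Λ.r sig ∧ Λ.s sig = Λ.r tau ∧ Λ.comp (Λ.comp mu sig) tau = lam ∧
    Λ.d mu = m ∧ Λ.d sig = n - m ∧ Λ.d tau = Λ.d lam - n

theorem IsSeg.unique {lam sig sig' : Λ.Path} {m n : Fin k → ℕ} (h : Λ.IsSeg lam m n sig)
    (h' : Λ.IsSeg lam m n sig') : sig = sig' := by
  obtain ⟨mu, tau, h1, h2, h3, hm, hs, ht⟩ := h
  obtain ⟨mu', tau', h1', h2', h3', hm', hs', ht'⟩ := h'
  have hprefix := Λ.eq_of_comp_eq_s8 (by rwa [Λ.s_comp _ _ h1]) (by rwa [Λ.s_comp _ _ h1'])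
    (h3.trans h3'.symm) (by rw [Λ.d_comp _ _ h1, Λ.d_comp _ _ h1', hm, hs, hm', hs'])
    (ht.trans ht'.symm)
  exact (Λ.eq_of_comp_eq_s8 h1 h1' hprefix.1 (hm.trans hm'.symm) (hs.trans hs'.symm)).2

theorem seg_eq_choose {lam : Λ.Path} {m n : Fin k → ℕ} (hex : ∃ sig, Λ.IsSeg lam m n sig) :
    Λ.seg lam m n = hex.choose :=
  dif_pos hex

theorem IsSeg.seg_eq {lam sig : Λ.Path} {m n : Fin k → ℕ} (h : Λ.IsSeg lam m n sig) :
    Λ.seg lam m n = sig :=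
  (seg_eq_choose ⟨sig, h⟩).trans (Exists.choose_spec ⟨sig, h⟩ |>.unique h)

theorem isSeg_seg {lam : Λ.Path} {m n : Fin k → ℕ} (hmn : m ≤ n) (hn : n ≤ Λ.d lam) :
    Λ.IsSeg lam m n (Λ.seg lam m n) := by
  suffices hex : ∃ sig, Λ.IsSeg lam m n sig by
    rw [seg_eq_choose hex]
    exact hex.choose_spec
  obtain ⟨⟨mu, rho⟩, ⟨h1, h2, h3, h4⟩, -⟩ :=
    Λ.factor lam m (Λ.d lam - m) (add_tsub_cancel_of_le (hmn.trans hn)).symm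
  obtain ⟨⟨sig, tau⟩, ⟨g1, g2, g3, g4⟩, -⟩ :=
    Λ.factor rho (n - m) (Λ.d lam - n) (by rw [h4, add_comm, tsub_add_tsub_cancel hn hmn])
  have hmu : Λ.s mu = Λ.r sig := by rw [h1, ← g2, Λ.r_comp _ _ g1]
  exact ⟨sig, mu, tau, hmu, g1, by rw [Λ.comp_assoc _ _ _ hmu g1, g2, h2], h3, g3, g4⟩

theorem window_bounds {m c d : Fin k → ℕ} (hmc : m ≤ c) (hcd : c ≤ d) :
    m ≤ m + d - c ∧ m + d - c ≤ d :=
  ⟨fun i => by have : c i ≤ d i := hcd i; simp only [Pi.add_apply, Pi.sub_apply]; omega,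
   fun i => by have : m i ≤ c i := hmc i; simp only [Pi.add_apply, Pi.sub_apply]; omega⟩

/-- `lam` witnesses that `Λ` has no local periodicity for the pair of degrees `m`, `n`. -/
def Separates (Λ : KGraph k) (lam : Λ.Path) (m n : Fin k → ℕ) : Prop :=
  m ⊔ n ≤ Λ.d lam ∧
    Λ.seg lam m (m + Λ.d lam - (m ⊔ n)) ≠ Λ.seg lam n (n + Λ.d lam - (m ⊔ n))

theorem not_separates_self (lam : Λ.Path) (m : Fin k → ℕ) : ¬ Λ.Separates lam m m :=
  fun h => h.2 rfl

end Segments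

section Product

variable {k₁ k₂ : ℕ} {Λ₁ : KGraph k₁} {Λ₂ : KGraph k₂}

theorem prod_isVertex_iff {v₁ : Λ₁.Path} {v₂ : Λ₂.Path} :
    (Λ₁.prod Λ₂).IsVertex (v₁, v₂) ↔ Λ₁.IsVertex v₁ ∧ Λ₂.IsVertex v₂ := by
  change Fin.append _ _ = 0 ↔ _ = 0 ∧ _ = 0
  rw [← fin_append_zero, Fin.append_inj_iff]

theorem prod_d (lam₁ : Λ₁.Path) (lam₂ : Λ₂.Path) :
    (Λ₁.prod Λ₂).d (lam₁, lam₂) = Fin.append (Λ₁.d lam₁) (Λ₂.d lam₂) :=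
  rfl

theorem IsSeg.prod {lam₁ sig₁ : Λ₁.Path} {lam₂ sig₂ : Λ₂.Path} {m₁ n₁ : Fin k₁ → ℕ}
    {m₂ n₂ : Fin k₂ → ℕ} (h₁ : Λ₁.IsSeg lam₁ m₁ n₁ sig₁) (h₂ : Λ₂.IsSeg lam₂ m₂ n₂ sig₂) :
    (Λ₁.prod Λ₂).IsSeg (lam₁, lam₂) (Fin.append m₁ m₂) (Fin.append n₁ n₂) (sig₁, sig₂) := by
  obtain ⟨mu₁, tau₁, a1, a2, a3, a4, a5, a6⟩ := h₁
  obtain ⟨mu₂, tau₂, b1, b2, b3, b4, b5, b6⟩ := h₂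
  refine ⟨(mu₁, mu₂), (tau₁, tau₂), congrArg₂ Prod.mk a1 b1, congrArg₂ Prod.mk a2 b2,
    congrArg₂ Prod.mk a3 b3, congrArg₂ Fin.append a4 b4, ?_, ?_⟩
  · change Fin.append _ _ = _
    rw [a5, b5, Fin.append_sub]
  · change Fin.append _ _ = Fin.append _ _ - _
    rw [a6, b6, Fin.append_sub]

theorem prod_seg {lam₁ : Λ₁.Path} {lam₂ : Λ₂.Path} {m₁ n₁ : Fin k₁ → ℕ} {m₂ n₂ : Fin k₂ → ℕ}
    (hmn₁ : m₁ ≤ n₁) (hn₁ : n₁ ≤ Λ₁.d lam₁) (hmn₂ : m₂ ≤ n₂) (hn₂ : n₂ ≤ Λ₂.d lam₂) :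
    (Λ₁.prod Λ₂).seg (lam₁, lam₂) (Fin.append m₁ m₂) (Fin.append n₁ n₂) =
      (Λ₁.seg lam₁ m₁ n₁, Λ₂.seg lam₂ m₂ n₂) :=
  ((isSeg_seg hmn₁ hn₁).prod (isSeg_seg hmn₂ hn₂)).seg_eq

theorem prod_separates_iff {lam₁ : Λ₁.Path} {lam₂ : Λ₂.Path} {m₁ n₁ : Fin k₁ → ℕ}
    {m₂ n₂ : Fin k₂ → ℕ} :
    (Λ₁.prod Λ₂).Separates (lam₁, lam₂) (Fin.append m₁ m₂) (Fin.append n₁ n₂) ↔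
      (m₁ ⊔ n₁ ≤ Λ₁.d lam₁ ∧ m₂ ⊔ n₂ ≤ Λ₂.d lam₂) ∧
        (Λ₁.Separates lam₁ m₁ n₁ ∨ Λ₂.Separates lam₂ m₂ n₂) := by
  simp only [Separates, prod_d, ← Fin.append_sup, ← fin_append_add, ← Fin.append_sub, Fin.append_le_append_iff]
  refine and_congr_right fun ⟨h₁, h₂⟩ => ?_
  obtain ⟨hm₁, hm₁'⟩ := window_bounds (le_sup_left : m₁ ≤ m₁ ⊔ n₁) h₁
  obtain ⟨hn₁, hn₁'⟩ := window_bounds (le_sup_right : n₁ ≤ m₁ ⊔ n₁) h₁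
  obtain ⟨hm₂, hm₂'⟩ := window_bounds (le_sup_left : m₂ ≤ m₂ ⊔ n₂) h₂
  obtain ⟨hn₂, hn₂'⟩ := window_bounds (le_sup_right : n₂ ≤ m₂ ⊔ n₂) h₂
  rw [prod_seg hm₁ hm₁' hm₂ hm₂', prod_seg hn₁ hn₁' hn₂ hn₂']
  change ¬((_ : Λ₁.Path × Λ₂.Path) = _) ↔ _
  rw [Prod.mk.injEq, not_and_or]
  simp only [h₁, h₂, true_and]

theorem NoLocalPeriodicity.of_prod {v₁ : Λ₁.Path} {v₂ : Λ₂.Path}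
    (h : (Λ₁.prod Λ₂).NoLocalPeriodicity (v₁, v₂)) :
    Λ₁.NoLocalPeriodicity v₁ ∧ Λ₂.NoLocalPeriodicity v₂ := by
  refine ⟨fun m₁ n₁ hne => ?_, fun m₂ n₂ hne => ?_⟩
  · obtain ⟨⟨lam₁, lam₂⟩, hr, hsep⟩ :=
      h (Fin.append m₁ 0) (Fin.append n₁ 0) fun heq => hne (Fin.append_inj_iff.1 heq).1
    have hsep : (Λ₁.prod Λ₂).Separates (lam₁, lam₂) (Fin.append m₁ 0) (Fin.append n₁ 0) := hsep
    exact ⟨lam₁, congrArg Prod.fst hr,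
      (prod_separates_iff.1 hsep).2.resolve_right (not_separates_self _ _)⟩
  · obtain ⟨⟨lam₁, lam₂⟩, hr, hsep⟩ :=
      h (Fin.append 0 m₂) (Fin.append 0 n₂) fun heq => hne (Fin.append_inj_iff.1 heq).2
    have hsep : (Λ₁.prod Λ₂).Separates (lam₁, lam₂) (Fin.append 0 m₂) (Fin.append 0 n₂) := hsep
    exact ⟨lam₂, congrArg Prod.snd hr,
      (prod_separates_iff.1 hsep).2.resolve_left (not_separates_self _ _)⟩

theorem NoLocalPeriodicity.prod (hns₁ : Λ₁.NoSources) (hns₂ : Λ₂.NoSources)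
    {v₁ : Λ₁.Path} {v₂ : Λ₂.Path} (hv₁ : Λ₁.IsVertex v₁) (hv₂ : Λ₂.IsVertex v₂)
    (h₁ : Λ₁.NoLocalPeriodicity v₁) (h₂ : Λ₂.NoLocalPeriodicity v₂) :
    (Λ₁.prod Λ₂).NoLocalPeriodicity (v₁, v₂) := by
  intro m n hne
  obtain ⟨m₁, m₂, rfl⟩ := Fin.exists_append_eq m
  obtain ⟨n₁, n₂, rfl⟩ := Fin.exists_append_eq n
  rw [Ne, Fin.append_inj_iff, not_and_or] at hne
  rcases hne with hne | hne
  · obtain ⟨lam₁, hr₁, hsep₁⟩ := h₁ m₁ n₁ hne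
    obtain ⟨lam₂, hr₂, hd₂⟩ := hns₂.exists_path hv₂ (m₂ ⊔ n₂)
    exact ⟨(lam₁, lam₂), congrArg₂ Prod.mk hr₁ hr₂,
      prod_separates_iff.2 ⟨⟨hsep₁.1, hd₂.ge⟩, Or.inl hsep₁⟩⟩
  · obtain ⟨lam₁, hr₁, hd₁⟩ := hns₁.exists_path hv₁ (m₁ ⊔ n₁)
    obtain ⟨lam₂, hr₂, hsep₂⟩ := h₂ m₂ n₂ hne
    exact ⟨(lam₁, lam₂), congrArg₂ Prod.mk hr₁ hr₂,
      prod_separates_iff.2 ⟨⟨hd₁.ge, hsep₂.1⟩, Or.inr hsep₂⟩⟩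

end Product

end KGraph

theorem stmt8_general {k₁ k₂ : ℕ} (Λ₁ : KGraph k₁) (Λ₂ : KGraph k₂)
    (h₁s : Λ₁.NoSources) (h₂s : Λ₂.NoSources) :
    (Λ₁.prod Λ₂).Aperiodic ↔ (Λ₁.Aperiodic ∧ Λ₂.Aperiodic) := by
  constructor
  · intro h
    obtain ⟨p₁⟩ := Λ₁.nonempty
    obtain ⟨p₂⟩ := Λ₂.nonempty
    exact ⟨fun v₁ hv₁ => (h _ (KGraph.prod_isVertex_iff.2 ⟨hv₁, Λ₂.d_r p₂⟩)).of_prod.1,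
      fun v₂ hv₂ => (h _ (KGraph.prod_isVertex_iff.2 ⟨Λ₁.d_r p₁, hv₂⟩)).of_prod.2⟩
  · rintro ⟨h₁, h₂⟩ ⟨v₁, v₂⟩ hv
    obtain ⟨hv₁, hv₂⟩ := KGraph.prod_isVertex_iff.1 hv
    exact .prod h₁s h₂s hv₁ hv₂ (h₁ v₁ hv₁) (h₂ v₂ hv₂)

/-- The cartesian product `Λ₁ × Λ₂` is aperiodic iff both `Λ₁` and `Λ₂`
are aperiodic. -/
theorem stmt8 {k₁ k₂ : ℕ} (Λ₁ : KGraph k₁) (Λ₂ : KGraph k₂)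
    (h₁f : Λ₁.RowFinite) (h₁s : Λ₁.NoSources)
    (h₂f : Λ₂.RowFinite) (h₂s : Λ₂.NoSources) :
    (Λ₁.prod Λ₂).Aperiodic ↔ (Λ₁.Aperiodic ∧ Λ₂.Aperiodic) :=
  stmt8_general Λ₁ Λ₂ h₁s h₂s
end
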